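/- arXiv:1705.08981 — 2 statements merged into one kernel-verified Lean document; each statement's English description precedes it below -/
import Mathlib

section
/- Let X = (X_1,…,X_m) be an m-tuple of N×N complex matrices with X^{[l]} := p^l ∑_{|w|=l} (X^w)* X^w. If p(X_1*X_1+⋯+X_m*X_m) ≤ θ I with 0 < θ < 1, then 0 ≤ X^{[l+1]} ≤ θ·X^{[l]} for every l ≥ 0, and hence X^{[l]} ≤ θ^l·I. -/
open Matrix
open scoped Matrix.Norms.L2Operator ComplexOrder

/-!
Peeling off the first letter of a word of length `l + 1` gives
`X^{[l+1]} = p^{l+1} ∑_{|w|=l} (X^w)* (∑ᵢ Xᵢ* Xᵢ) X^w`, hence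
`θ X^{[l]} - X^{[l+1]} = p^l ∑_{|w|=l} (X^w)* (θ I - p ∑ᵢ Xᵢ* Xᵢ) X^w`, a sum of congruences of a
positive semidefinite matrix. Iterating `X^{[l+1]} ≤ θ X^{[l]}` from `X^{[0]} = I` gives
`X^{[l]} ≤ θ^l I`.
-/

/-- `X^w`, the product of the coordinates of the tuple `X` along the word `w`. -/
noncomputable def wordProd {m N : ℕ} (X : Fin m → Matrix (Fin N) (Fin N) ℂ)
    (w : List (Fin m)) : Matrix (Fin N) (Fin N) ℂ :=
  (w.map X).prod

/-- `X^{[l]} = p^l ∑_{|w|=l} (X^w)* X^w`, the sum over all words of length `l`. -/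
noncomputable def lvlSum {m N : ℕ} (X : Fin m → Matrix (Fin N) (Fin N) ℂ) (p : ℝ) (l : ℕ) :
    Matrix (Fin N) (Fin N) ℂ :=
  (p ^ l : ℝ) • ∑ w : Fin l → Fin m, (wordProd X (List.ofFn w))ᴴ * wordProd X (List.ofFn w)

lemma sum_ofFn_succ {α M : Type*} [Fintype α] [AddCommMonoid M] (l : ℕ) (f : List α → M) :
    ∑ w : Fin (l + 1) → α, f (List.ofFn w) = ∑ w : Fin l → α, ∑ a, f (a :: List.ofFn w) := by
  rw [← (Fin.consEquiv fun _ => α).sum_comp, Fintype.sum_prod_type, Finset.sum_comm]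
  simp [Fin.consEquiv, List.ofFn_succ]

lemma posSemidef_pow_smul_one_sub_of_posSemidef_smul_sub_succ {n 𝕜 : Type*} [Fintype n]
    [DecidableEq n] [RCLike 𝕜] {A : ℕ → Matrix n n 𝕜} {θ : ℝ} (hθ : 0 ≤ θ) (h0 : A 0 = 1)
    (hA : ∀ l, (θ • A l - A (l + 1)).PosSemidef) (l : ℕ) :
    (θ ^ l • (1 : Matrix n n 𝕜) - A l).PosSemidef := by
  induction l with
  | zero => simpa [h0] using PosSemidef.zero
  | succ l ih =>
    have hsplit : θ ^ (l + 1) • (1 : Matrix n n 𝕜) - A (l + 1)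
        = θ • (θ ^ l • (1 : Matrix n n 𝕜) - A l) + (θ • A l - A (l + 1)) := by
      rw [smul_sub, smul_smul, ← pow_succ']
      abel
    rw [hsplit]
    exact (ih.smul hθ).add (hA l)

section lvlSum

variable {m N : ℕ} (X : Fin m → Matrix (Fin N) (Fin N) ℂ)

lemma lvlSum_zero (p : ℝ) : lvlSum X p 0 = 1 := by
  simp [lvlSum, wordProd]

lemma lvlSum_succ (p : ℝ) (l : ℕ) :
    lvlSum X p (l + 1) = (p ^ (l + 1) : ℝ) • ∑ w : Fin l → Fin m,
      (wordProd X (List.ofFn w))ᴴ * (∑ i, (X i)ᴴ * X i) * wordProd X (List.ofFn w) := by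
  rw [lvlSum, sum_ofFn_succ l fun w => (wordProd X w)ᴴ * wordProd X w]
  simp [wordProd, Matrix.mul_sum, Finset.sum_mul, Matrix.mul_assoc]

lemma smul_lvlSum_sub_lvlSum_succ (p θ : ℝ) (l : ℕ) :
    θ • lvlSum X p l - lvlSum X p (l + 1)
      = (p ^ l : ℝ) • ∑ w : Fin l → Fin m, (wordProd X (List.ofFn w))ᴴ *
          (θ • (1 : Matrix (Fin N) (Fin N) ℂ) - p • ∑ i, (X i)ᴴ * X i) *
          wordProd X (List.ofFn w) := by
  rw [lvlSum_succ]
  simp only [lvlSum, Matrix.mul_sub, Matrix.sub_mul, mul_smul_comm, smul_mul_assoc,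
    Matrix.mul_one, Finset.sum_sub_distrib, ← Finset.smul_sum, smul_sub, smul_smul, pow_succ,
    mul_comm θ]

lemma posSemidef_lvlSum {p : ℝ} (hp : 0 ≤ p) (l : ℕ) : (lvlSum X p l).PosSemidef :=
  (posSemidef_sum _ fun _ _ => posSemidef_conjTranspose_mul_self _).smul (pow_nonneg hp l)

lemma posSemidef_smul_lvlSum_sub_lvlSum_succ {p θ : ℝ} (hp : 0 ≤ p)
    (hX : (θ • (1 : Matrix (Fin N) (Fin N) ℂ) - p • ∑ i, (X i)ᴴ * X i).PosSemidef) (l : ℕ) :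
    (θ • lvlSum X p l - lvlSum X p (l + 1)).PosSemidef := by
  rw [smul_lvlSum_sub_lvlSum_succ]
  exact (posSemidef_sum _ fun _ _ => hX.conjTranspose_mul_mul_same _).smul (pow_nonneg hp l)

end lvlSum

theorem lvlSum_posSemidef_and_decay_general
    (m N : ℕ) (p θ : ℝ) (hp : 0 < p) (hθ0 : 0 < θ)
    (X : Fin m → Matrix (Fin N) (Fin N) ℂ)
    (hX : (θ • (1 : Matrix (Fin N) (Fin N) ℂ) - p • ∑ i, (X i)ᴴ * X i).PosSemidef) :
    ∀ l : ℕ,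
      (lvlSum X p l).PosSemidef ∧ (lvlSum X p (l + 1)).PosSemidef ∧
      (θ • lvlSum X p l - lvlSum X p (l + 1)).PosSemidef ∧
      ((θ ^ l : ℝ) • (1 : Matrix (Fin N) (Fin N) ℂ) - lvlSum X p l).PosSemidef := by
  have hdecay := posSemidef_smul_lvlSum_sub_lvlSum_succ X hp.le hX
  intro l
  exact ⟨posSemidef_lvlSum X hp.le l, posSemidef_lvlSum X hp.le (l + 1), hdecay l,
    posSemidef_pow_smul_one_sub_of_posSemidef_smul_sub_succ hθ0.le (lvlSum_zero X p) hdecay l⟩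

/-- If `p (X_1* X_1 + ⋯ + X_m* X_m) ≤ θ I` with `0 < θ < 1`, then
`0 ≤ X^{[l+1]} ≤ θ X^{[l]}` for every `l ≥ 0`, and hence `X^{[l]} ≤ θ^l I`
in the Loewner order. -/
theorem lvlSum_posSemidef_and_decay
    (m N : ℕ) (p θ : ℝ) (hp : 0 < p) (hθ0 : 0 < θ) (hθ1 : θ < 1)
    (X : Fin m → Matrix (Fin N) (Fin N) ℂ)
    (hX : (θ • (1 : Matrix (Fin N) (Fin N) ℂ) - p • ∑ i, (X i)ᴴ * X i).PosSemidef) :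
    ∀ l : ℕ,
      (lvlSum X p l).PosSemidef ∧ (lvlSum X p (l + 1)).PosSemidef ∧
      (θ • lvlSum X p l - lvlSum X p (l + 1)).PosSemidef ∧
      ((θ ^ l : ℝ) • (1 : Matrix (Fin N) (Fin N) ℂ) - lvlSum X p l).PosSemidef :=
  lvlSum_posSemidef_and_decay_general m N p θ hp hθ0 X hX
end

section
/- Let X be an m-tuple of N×N matrices such that the series ∑_{|w|≤l} f_w X^w converges as l → ∞ for every {f_w} ∈ l²(F_m). Then for all vectors e, ẽ ∈ ℂ^N the family {e* X^w ẽ}_{w∈F_m} belongs to l²(F_m), and consequently the series ∑_{w∈F_m} (X^w)* X^w converges in ℂ^{N×N}. -/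
/-!
The coefficient functionals `f ↦ e* (∑_{|w| ≤ l} f_w X^w) ẽ` on `ℓ²(F_m)` are inner products with
the truncations of `c_w = conj (e* X^w ẽ)` to words of length `≤ l`. They converge pointwise, so by
Banach–Steinhaus their norms, i.e. the `ℓ²`-norms of the truncations of `c`, are uniformly bounded,
and `c ∈ ℓ²`. Taking `e, ẽ` among the standard basis vectors makes every entry of `X^w` square
summable, and each entry of `(X^w)* X^w` is a finite sum of products of two such sequences.
-/

open Matrix Filter
open scoped Matrix.Norms.L2Operator

/-- `E^{X,l}({f_w}) = ∑_{|w| ≤ l} f_w X^w`, a partial-sum evaluation map on `l²(F_m)`. -/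
noncomputable def partialEval {m N : ℕ} (X : Fin m → Matrix (Fin N) (Fin N) ℂ) (l : ℕ)
    (f : lp (fun _ : List (Fin m) => ℂ) 2) : Matrix (Fin N) (Fin N) ℂ :=
  ∑ k ∈ Finset.range (l + 1), ∑ w : Fin k → Fin m,
    f (List.ofFn w) • wordProd X (List.ofFn w)

open scoped ComplexConjugate

namespace lp

variable {ι 𝕜 : Type*} [RCLike 𝕜]

theorem inner_sum_single_left [DecidableEq ι] (s : Finset ι) (a : ι → 𝕜)
    (f : lp (fun _ : ι => 𝕜) 2) :
    inner 𝕜 (∑ i ∈ s, lp.single 2 i (a i)) f = ∑ i ∈ s, conj (a i) * f i := by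
  simp [sum_inner, inner_single_left, mul_comm]

theorem norm_sum_single_sq [DecidableEq ι] (s : Finset ι) (a : ι → 𝕜) :
    ‖∑ i ∈ s, lp.single 2 i (a i)‖ ^ 2 = ∑ i ∈ s, ‖a i‖ ^ 2 := by
  simpa using lp.norm_sum_single (E := fun _ : ι => 𝕜) (p := 2) (by norm_num) a s

end lp

theorem summable_norm_sq_of_forall_bounded {ι 𝕜 : Type*} [RCLike 𝕜] (c : ι → 𝕜)
    (S : ℕ → Finset ι) (hS : ∀ F : Finset ι, ∃ l, F ⊆ S l)
    (hc : ∀ f : lp (fun _ : ι => 𝕜) 2, ∃ C, ∀ l, ‖∑ i ∈ S l, c i * f i‖ ≤ C) :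
    Summable fun i => ‖c i‖ ^ 2 := by
  classical
  set g : ℕ → lp (fun _ : ι => 𝕜) 2 := fun l => ∑ i ∈ S l, lp.single 2 i (conj (c i))
  have hg : ∀ l f, innerSL 𝕜 (g l) f = ∑ i ∈ S l, c i * f i := by
    intro l f
    simp only [g, innerSL_apply_apply, lp.inner_sum_single_left, RCLike.conj_conj]
  obtain ⟨C, hC⟩ := banach_steinhaus (g := fun l => innerSL 𝕜 (g l)) (by simpa only [hg] using hc)
  refine summable_of_sum_le (fun _ => by positivity) (c := C ^ 2) fun F => ?_
  obtain ⟨l, hl⟩ := hS F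
  calc ∑ i ∈ F, ‖c i‖ ^ 2 ≤ ∑ i ∈ S l, ‖c i‖ ^ 2 :=
        Finset.sum_le_sum_of_subset_of_nonneg hl fun _ _ _ => by positivity
    _ = ‖g l‖ ^ 2 := by simp only [g, lp.norm_sum_single_sq, RCLike.norm_conj]
    _ ≤ C ^ 2 := by
        have hgl : ‖g l‖ ≤ C := by simpa only [innerSL_apply_norm] using hC l
        gcongr

section Words

variable (α : Type*) [Fintype α]

def wordsUpTo (l : ℕ) : Finset (List α) :=
  ((Finset.range (l + 1)).sigma fun _ => Finset.univ).map List.equivSigmaTuple.symm.toEmbedding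

variable {α}

theorem mem_wordsUpTo {l : ℕ} {w : List α} : w ∈ wordsUpTo α l ↔ w.length ≤ l := by
  simp [wordsUpTo, Finset.mem_map_equiv, List.equivSigmaTuple]

theorem sum_wordsUpTo {M : Type*} [AddCommMonoid M] (g : List α → M) (l : ℕ) :
    ∑ w ∈ wordsUpTo α l, g w = ∑ k ∈ Finset.range (l + 1), ∑ w : Fin k → α, g (List.ofFn w) := by
  rw [wordsUpTo, Finset.sum_map, Finset.sum_sigma]
  rfl

theorem subset_wordsUpTo_sup_length (F : Finset (List α)) :
    F ⊆ wordsUpTo α (F.sup List.length) :=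
  fun _ hw => mem_wordsUpTo.2 (Finset.le_sup hw)

end Words

theorem dotProduct_partialEval_mulVec {m N : ℕ} (X : Fin m → Matrix (Fin N) (Fin N) ℂ) (l : ℕ)
    (f : lp (fun _ : List (Fin m) => ℂ) 2) (u v : Fin N → ℂ) :
    u ⬝ᵥ partialEval X l f *ᵥ v = ∑ w ∈ wordsUpTo (Fin m) l, (u ⬝ᵥ wordProd X w *ᵥ v) * f w := by
  simp only [partialEval, sum_wordsUpTo, sum_mulVec, dotProduct_sum, smul_mulVec, dotProduct_smul,
    smul_eq_mul, mul_comm]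

theorem summable_norm_sq_dotProduct_wordProd_mulVec {m N : ℕ}
    (X : Fin m → Matrix (Fin N) (Fin N) ℂ)
    (hX : ∀ f : lp (fun _ : List (Fin m) => ℂ) 2,
      ∃ L, Tendsto (fun l : ℕ => partialEval X l f) atTop (nhds L))
    (u v : Fin N → ℂ) :
    Summable fun w : List (Fin m) => ‖u ⬝ᵥ wordProd X w *ᵥ v‖ ^ 2 := by
  refine summable_norm_sq_of_forall_bounded _ (wordsUpTo (Fin m))
    (fun F => ⟨_, subset_wordsUpTo_sup_length F⟩) fun f => ?_
  obtain ⟨L, hL⟩ := hX f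
  have hconv : Tendsto (fun l => u ⬝ᵥ partialEval X l f *ᵥ v) atTop (nhds (u ⬝ᵥ L *ᵥ v)) :=
    ((by fun_prop : Continuous fun A : Matrix (Fin N) (Fin N) ℂ => u ⬝ᵥ A *ᵥ v).tendsto L).comp hL
  obtain ⟨C, hC⟩ := hconv.norm.bddAbove_range
  exact ⟨C, fun l => by
    simpa only [dotProduct_partialEval_mulVec] using hC (Set.mem_range_self l)⟩

theorem summable_conjTranspose_mul_self {ι k n 𝕜 : Type*} [Fintype k] [RCLike 𝕜]
    (A : ι → Matrix k n 𝕜) (hA : ∀ a i, Summable fun w => ‖A w a i‖ ^ 2) :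
    Summable fun w => (A w)ᴴ * A w := by
  refine Pi.summable.2 fun i => Pi.summable.2 fun j => ?_
  simp only [mul_apply, conjTranspose_apply]
  refine summable_sum fun a _ => Summable.of_norm_bounded ((hA a i).add (hA a j)) fun w => ?_
  rw [norm_mul, norm_star]
  nlinarith [sq_nonneg (‖A w a i‖ - ‖A w a j‖), norm_nonneg (A w a i), norm_nonneg (A w a j)]

/-- If `∑_{|w| ≤ l} f_w X^w` converges as `l → ∞` for every `{f_w} ∈ l²(F_m)`, then for all
vectors `e, e2 ∈ ℂ^N` the family `{e* X^w e2}` belongs to `l²(F_m)`, and consequently the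
series `∑_{w} (X^w)* X^w` converges in `ℂ^{N×N}`. -/
theorem vector_coefficients_square_summable
    (m N : ℕ) (X : Fin m → Matrix (Fin N) (Fin N) ℂ)
    (hX : ∀ f : lp (fun _ : List (Fin m) => ℂ) 2,
      ∃ L, Tendsto (fun l : ℕ => partialEval X l f) atTop (nhds L)) :
    (∀ e e2 : Fin N → ℂ,
      Summable fun w : List (Fin m) => ‖star e ⬝ᵥ (wordProd X w).mulVec e2‖ ^ 2) ∧
    ∃ S, HasSum (fun w : List (Fin m) => (wordProd X w)ᴴ * wordProd X w) S := by
  have hcoeff := summable_norm_sq_dotProduct_wordProd_mulVec X hX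
  refine ⟨fun e e2 => hcoeff (star e) e2, _,
    (summable_conjTranspose_mul_self _ fun k i => ?_).hasSum⟩
  simpa using hcoeff (Pi.single k 1) (Pi.single i 1)
end
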